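/- arXiv:1701.04271 — 8 statements merged into one kernel-verified Lean document; each statement's English description precedes it below -/
import Mathlib

section
/- Let f_1, ..., f_n : ℝ^d → ℝ be twice continuously differentiable, and suppose that for each j and every w ∈ ℝ^d and v ∈ ℝ^d, |⟨v, ∇²f_j(w) v⟩| ≤ β₁‖v‖². Let F̂ = (1/n)∑_{j=1}^n f_j and fix i ∈ [n]. If ŵ_i is a global minimizer over ℝ^d of w ↦ (1/n)∑_{j≠i} f_j(w), then for every v ∈ ℝ^d, ⟨v, ∇²F̂(ŵ_i) v⟩ ≥ −(β₁/n)‖v‖². In particular, if n > β₁/γ for some γ > 0, then ⟨v, ∇²F̂(ŵ_i) v⟩ > −γ‖v‖² for all nonzero v. -/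
/-!
The leave-one-out objective `G = ∑_{j ≠ i} f j` attains its minimum at `ŵᵢ`, so its Hessian
there is positive semidefinite; restricting `G` to lines through `ŵᵢ` reduces this to the
one-variable second-order condition. Hence `n ∇²F̂(ŵᵢ) = ∇²fᵢ(ŵᵢ) + ∇²G(ŵᵢ) ⪰ ∇²fᵢ(ŵᵢ) ⪰ -β₁ I`.
-/

open Filter Topology

/- A negative second derivative would make `a` also a local maximum by the second-derivative
test, so `f` would be locally constant. -/
theorem IsLocalMin.deriv_deriv_nonneg {f : ℝ → ℝ} {a : ℝ} (h : IsLocalMin f a)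
    (hc : ContinuousAt f a) : 0 ≤ deriv (deriv f) a := by
  by_contra! hneg
  have hmax : IsLocalMax f a := isLocalMax_of_deriv_deriv_neg hneg h.deriv_eq_zero hc
  have hconst : f =ᶠ[𝓝 a] fun _ => f a := by
    filter_upwards [h, hmax] with x hmin hmax using le_antisymm hmax hmin
  have hderiv : deriv f =ᶠ[𝓝 a] fun _ => 0 := by simpa using hconst.deriv
  simp [hderiv.deriv_eq] at hneg

theorem ContDiff.deriv_deriv_comp_add_smul {𝕜 E F : Type*} [NontriviallyNormedField 𝕜]
    [NormedAddCommGroup E] [NormedSpace 𝕜 E] [NormedAddCommGroup F] [NormedSpace 𝕜 F]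
    {f : E → F} (hf : ContDiff 𝕜 2 f) (x y : E) (t : 𝕜) :
    deriv (deriv fun s : 𝕜 => f (x + s • y)) t =
      iteratedFDeriv 𝕜 2 f (x + t • y) (fun _ => y) := by
  have hfirst : deriv (fun s : 𝕜 => f (x + s • y)) =
      fun s => iteratedFDeriv 𝕜 1 f (x + s • y) (fun _ => y) := by
    funext s
    simpa using (hf.contDiffAt (x := x + s • y)).of_le
      (by norm_num : ((0 : ℕ) + 1 : WithTop ℕ∞) ≤ 2) |>.deriv_fderiv_add_smul
  rw [hfirst]
  exact hf.contDiffAt.deriv_fderiv_add_smul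

theorem IsLocalMin.iteratedFDeriv_two_nonneg {E : Type*} [NormedAddCommGroup E]
    [NormedSpace ℝ E] {f : E → ℝ} {x : E} (h : IsLocalMin f x) (hf : ContDiff ℝ 2 f) (v : E) :
    0 ≤ iteratedFDeriv ℝ 2 f x (fun _ => v) := by
  have hline : IsLocalMin (fun t : ℝ => f (x + t • v)) 0 :=
    IsLocalMin.comp_continuous (g := fun t : ℝ => x + t • v) (by simpa using h) (by fun_prop)
  have hline_cont : ContinuousAt (fun t : ℝ => f (x + t • v)) 0 := by
    have := hf.continuous
    fun_prop
  simpa using (hline.deriv_deriv_nonneg hline_cont).trans_eq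
    (hf.deriv_deriv_comp_add_smul x v 0)

theorem iteratedFDeriv_two_le_sum_of_isLocalMin_sum_erase {ι E : Type*} [DecidableEq ι]
    [NormedAddCommGroup E] [NormedSpace ℝ E] {f : ι → E → ℝ} {s : Finset ι}
    (hf : ∀ j ∈ s, ContDiff ℝ 2 (f j)) {i : ι} (hi : i ∈ s) {x : E}
    (hmin : IsLocalMin (fun w => ∑ j ∈ s.erase i, f j w) x) (v : E) :
    iteratedFDeriv ℝ 2 (f i) x (fun _ => v) ≤
      iteratedFDeriv ℝ 2 (fun w => ∑ j ∈ s, f j w) x (fun _ => v) := by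
  have hsum : ∀ u ⊆ s, iteratedFDeriv ℝ 2 (fun w => ∑ j ∈ u, f j w) x (fun _ => v) =
      ∑ j ∈ u, iteratedFDeriv ℝ 2 (f j) x (fun _ => v) := fun u hu => by
    rw [iteratedFDeriv_fun_sum_apply fun j hj => (hf j (hu hj)).contDiffAt, sum_apply]
  have hrest := hmin.iteratedFDeriv_two_nonneg
    (ContDiff.sum fun j hj => hf j (Finset.mem_of_mem_erase hj)) v
  rw [hsum _ (Finset.erase_subset i s)] at hrest
  rw [hsum s subset_rfl, ← Finset.add_sum_erase s _ hi]
  exact le_add_of_nonneg_right hrest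

/-- If each `f j` is `C²` with Hessian quadratic form bounded in
absolute value by `β₁‖v‖²`, and `ŵᵢ` is a global minimizer of the leave-one-out
average, then the Hessian quadratic form of `F̂ = (1/n)∑ f j` at `ŵᵢ` is bounded
below by `−(β₁/n)‖v‖²`; in particular if `n > β₁/γ` with `γ > 0`, it is
`> −γ‖v‖²` for every nonzero `v`. -/
theorem stmt_1 {d n : ℕ} (f : Fin n → EuclideanSpace ℝ (Fin d) → ℝ) (β₁ : ℝ)
    (hsmooth : ∀ j, ContDiff ℝ 2 (f j))
    (hhess : ∀ j (w v : EuclideanSpace ℝ (Fin d)),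
      |iteratedFDeriv ℝ 2 (f j) w ![v, v]| ≤ β₁ * ‖v‖ ^ 2)
    (i : Fin n) (wi : EuclideanSpace ℝ (Fin d))
    (hmin : ∀ w, (1 / n : ℝ) * ∑ j ∈ Finset.univ.erase i, f j wi ≤
      (1 / n : ℝ) * ∑ j ∈ Finset.univ.erase i, f j w) :
    (∀ v : EuclideanSpace ℝ (Fin d),
      iteratedFDeriv ℝ 2 (fun w => (1 / n : ℝ) * ∑ j, f j w) wi ![v, v]
        ≥ -(β₁ / n) * ‖v‖ ^ 2) ∧
    ∀ γ : ℝ, 0 < γ → (n : ℝ) > β₁ / γ → ∀ v : EuclideanSpace ℝ (Fin d), v ≠ 0 →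
      iteratedFDeriv ℝ 2 (fun w => (1 / n : ℝ) * ∑ j, f j w) wi ![v, v]
        > -γ * ‖v‖ ^ 2 := by
  have hn : (0 : ℝ) < n := Nat.cast_pos.mpr i.pos
  have hloo : IsLocalMin (fun w => ∑ j ∈ Finset.univ.erase i, f j w) wi :=
    Eventually.of_forall fun w => le_of_mul_le_mul_left (hmin w) (by positivity)
  have hscale : iteratedFDeriv ℝ 2 (fun w => (1 / n : ℝ) * ∑ j, f j w) wi =
      (1 / n : ℝ) • iteratedFDeriv ℝ 2 (fun w => ∑ j, f j w) wi :=
    iteratedFDeriv_const_smul_apply' (a := (1 / n : ℝ)) (f := fun w => ∑ j, f j w)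
      (ContDiff.sum fun j _ => hsmooth j).contDiffAt
  have hlower : ∀ v : EuclideanSpace ℝ (Fin d),
      iteratedFDeriv ℝ 2 (fun w => (1 / n : ℝ) * ∑ j, f j w) wi ![v, v]
        ≥ -(β₁ / n) * ‖v‖ ^ 2 := by
    intro v
    have hvv : ![v, v] = fun _ => v := by
      funext k; fin_cases k <;> rfl
    have hfi : -(β₁ * ‖v‖ ^ 2) ≤ iteratedFDeriv ℝ 2 (f i) wi (fun _ => v) :=
      hvv ▸ neg_le_of_abs_le (hhess i wi v)
    have hsum := iteratedFDeriv_two_le_sum_of_isLocalMin_sum_erase (fun j _ => hsmooth j)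
      (Finset.mem_univ i) hloo v
    rw [hscale, smul_apply, smul_eq_mul, hvv]
    calc -(β₁ / n) * ‖v‖ ^ 2 = 1 / n * -(β₁ * ‖v‖ ^ 2) := by ring
      _ ≤ _ := by gcongr; exact hfi.trans hsum
  refine ⟨hlower, fun γ hγ hnγ v hv => ?_⟩
  have hβγ : β₁ / n < γ := (div_lt_comm₀ hγ hn).mp hnγ
  have hv2 : 0 < ‖v‖ ^ 2 := by positivity
  exact lt_of_lt_of_le (by nlinarith) (hlower v)
end

section
/- Let f_1, ..., f_n : ℝ^d → ℝ with each f_j ρ-Lipschitz, let F̂ = (1/n)∑_{j=1}^n f_j, and fix i ∈ [n]. Let ŵ_i be a global minimizer of w ↦ (1/n)∑_{j≠i} f_j(w), and let w̄ ∈ ℝ^d be a point satisfying the strong-convexity inequality F̂(ŵ_i) − F̂(w̄) ≥ (α/2)‖ŵ_i − w̄‖² for some α > 0. Then f_i(ŵ_i) − f_i(w̄) ≤ 2ρ²/(α n). -/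
/-- If each `f j` is `ρ`-Lipschitz, `ŵᵢ` is a global minimizer of the
leave-one-out average, and `w̄` satisfies the strong-convexity inequality
`F̂(ŵᵢ) − F̂(w̄) ≥ (α/2)‖ŵᵢ − w̄‖²` for some `α > 0`, then
`fᵢ(ŵᵢ) − fᵢ(w̄) ≤ 2ρ²/(αn)`. -/
theorem stmt_3 {d n : ℕ} (f : Fin n → EuclideanSpace ℝ (Fin d) → ℝ) (ρ : ℝ)
    (hlip : ∀ j (u v : EuclideanSpace ℝ (Fin d)), |f j u - f j v| ≤ ρ * ‖u - v‖)
    (i : Fin n) (wi wbar : EuclideanSpace ℝ (Fin d)) (α : ℝ) (hα : 0 < α)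
    (hmin : ∀ w, (1 / n : ℝ) * ∑ j ∈ Finset.univ.erase i, f j wi ≤
      (1 / n : ℝ) * ∑ j ∈ Finset.univ.erase i, f j w)
    (hsc : (1 / n : ℝ) * ∑ j, f j wi - (1 / n : ℝ) * ∑ j, f j wbar ≥
      (α / 2) * ‖wi - wbar‖ ^ 2) :
    f i wi - f i wbar ≤ 2 * ρ ^ 2 / (α * n) := by
  have hn : (0:ℝ) < n := by exact_mod_cast i.pos
  set t := ‖wi - wbar‖ with ht
  have ht0 : 0 ≤ t := norm_nonneg _
  have hsum : ∀ w, ∑ j, f j w = f i w + ∑ j ∈ Finset.univ.erase i, f j w := by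
    intro w
    rw [← Finset.add_sum_erase _ _ (Finset.mem_univ i)]
  have key : (α/2) * t^2 ≤ (1/n) * (f i wi - f i wbar) := by
    have h1 := hmin wbar
    have h2 := hsc
    rw [hsum wi, hsum wbar] at h2
    have hninv : (0:ℝ) < 1/n := by positivity
    nlinarith [h2, h1]
  have habs : |f i wi - f i wbar| ≤ ρ * t := hlip i wi wbar
  have hle : f i wi - f i wbar ≤ ρ * t := le_trans (le_abs_self _) habs
  have hrhs : (0:ℝ) ≤ 2 * ρ^2 / (α * n) := by positivity
  by_cases hz : t = 0
  · have : f i wi - f i wbar ≤ 0 := by rw [hz] at hle; linarith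
    linarith
  · have htpos : 0 < t := lt_of_le_of_ne ht0 (Ne.symm hz)
    have hρ : 0 ≤ ρ := by nlinarith [abs_nonneg (f i wi - f i wbar)]
    -- from key and hle: (α/2) t² ≤ (ρ/n) t, so t ≤ 2ρ/(αn)
    have key' : (α/2) * t^2 * n ≤ f i wi - f i wbar := by
      have h2 : (1/n:ℝ) * (f i wi - f i wbar) = (f i wi - f i wbar) / n := by ring
      rw [h2, le_div_iff₀ hn] at key
      linarith
    have htb : t ≤ 2*ρ/(α*n) := by
      rw [le_div_iff₀ (by positivity)]
      nlinarith [key', hle]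
    have : ρ * t ≤ 2*ρ^2/(α*n) := by
      have := mul_le_mul_of_nonneg_left htb hρ
      calc ρ * t ≤ ρ * (2*ρ/(α*n)) := this
        _ = 2*ρ^2/(α*n) := by ring
    linarith
end

section
/- Let f_1, ..., f_n : ℝ^d → ℝ be twice continuously differentiable, each ρ-Lipschitz, with Hessians satisfying |⟨v, ∇²f_j(w) v⟩| ≤ β₁‖v‖² for all w, v, j. Suppose the empirical risk F̂ = (1/n)∑_{j=1}^n f_j is (α, γ, τ)-strict saddle, and suppose n > max(ρ/τ, β₁/γ). Fix i ∈ [n] and let ŵ_i be a global minimizer of w ↦ (1/n)∑_{j≠i} f_j(w). Then there exists a global minimizer w̄ of F̂ such that f_i(ŵ_i) − f_i(w̄) ≤ 2ρ²/(α n). -/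
/-- A twice continuously differentiable function `F : ℝ^d → ℝ` is
`(α, γ, τ)`-strict saddle if every local minimum is a global minimum and at every
point `w` one of the following holds: (1) `‖∇F(w)‖ ≥ τ`; (2) there is a unit
direction of curvature at most `−γ`; (3) `w` is within distance `ν` of a local
minimum `w*` around which `F` is `α`-strongly convex on the `2ν`-ball. -/
def IsStrictSaddle {d : ℕ} (F : EuclideanSpace ℝ (Fin d) → ℝ) (α γ τ : ℝ) : Prop :=
  ContDiff ℝ 2 F ∧
  (∀ w, IsLocalMin F w → ∀ u, F w ≤ F u) ∧
  ∀ w : EuclideanSpace ℝ (Fin d),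
    ‖gradient F w‖ ≥ τ ∨
    (∃ v : EuclideanSpace ℝ (Fin d), ‖v‖ = 1 ∧ iteratedFDeriv ℝ 2 F w ![v, v] ≤ -γ) ∨
    (∃ ν : ℝ, 0 < ν ∧ ∃ wstar : EuclideanSpace ℝ (Fin d), IsLocalMin F wstar ∧
      ‖w - wstar‖ ≤ ν ∧
      ∀ u ∈ Metric.closedBall wstar (2 * ν), ∀ v : EuclideanSpace ℝ (Fin d),
        iteratedFDeriv ℝ 2 F u ![v, v] ≥ α * ‖v‖ ^ 2)

/-!
Write `F̂ = G + fᵢ / n`, where `G` is the leave-one-out risk minimized at `ŵᵢ`. Then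
`∇F̂(ŵᵢ) = ∇fᵢ(ŵᵢ) / n` has norm at most `ρ / n < τ`, and since `∇²G(ŵᵢ)` is positive
semidefinite the curvature of `F̂` at `ŵᵢ` is at least `-β₁ / n > -γ`. The strict-saddle
alternative therefore places `ŵᵢ` in the strong-convexity region of a local, hence global,
minimizer `w̄`, where strong monotonicity of the gradient gives
`α ‖ŵᵢ - w̄‖ ≤ ‖∇F̂(ŵᵢ)‖ ≤ ρ / n`. The Lipschitz bound on `fᵢ` then gives
`fᵢ(ŵᵢ) - fᵢ(w̄) ≤ ρ² / (α n)`.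
-/

open Metric Filter Topology

section Calculus

variable {E E' : Type*} [NormedAddCommGroup E] [NormedSpace ℝ E]
  [NormedAddCommGroup E'] [NormedSpace ℝ E']

theorem hasDerivAt_comp_add_smul {F : E → E'} {x v : E} {t : ℝ}
    (hF : DifferentiableAt ℝ F (x + t • v)) :
    HasDerivAt (fun s : ℝ => F (x + s • v)) (fderiv ℝ F (x + t • v) v) t := by
  have hline : HasDerivAt (fun s : ℝ => x + s • v) v t := by
    simpa using ((hasDerivAt_id t).smul_const v).const_add x
  exact hF.hasFDerivAt.comp_hasDerivAt t hline

theorem hasDerivAt_fderiv_apply_comp_add_smul {F : E → E'} {x v : E} {t : ℝ}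
    (hF : DifferentiableAt ℝ (fderiv ℝ F) (x + t • v)) :
    HasDerivAt (fun s : ℝ => fderiv ℝ F (x + s • v) v)
      (iteratedFDeriv ℝ 2 F (x + t • v) ![v, v]) t := by
  simpa [iteratedFDeriv_two_apply] using
    (hasDerivAt_comp_add_smul hF).clm_apply (hasDerivAt_const t v)

theorem ContDiff.differentiable_fderiv {F : E → E'} (hF : ContDiff ℝ 2 F) :
    Differentiable ℝ (fderiv ℝ F) :=
  (hF.fderiv_right (m := 1) le_rfl).differentiable one_ne_zero

variable {F G h : E → ℝ} {x y : E}

theorem IsLocalMin.iteratedFDeriv_two_nonneg_s4 (hF : ContDiff ℝ 2 F) (hmin : IsLocalMin F x)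
    (v : E) : 0 ≤ iteratedFDeriv ℝ 2 F x ![v, v] := by
  set φ : ℝ → ℝ := fun t => F (x + t • v)
  have hφ' : deriv φ = fun t => fderiv ℝ F (x + t • v) v :=
    funext fun t => (hasDerivAt_comp_add_smul (hF.differentiable two_ne_zero _)).deriv
  have hφ'' : deriv (deriv φ) 0 = iteratedFDeriv ℝ 2 F x ![v, v] := by
    simpa [hφ'] using (hasDerivAt_fderiv_apply_comp_add_smul (x := x) (v := v) (t := 0)
      (hF.differentiable_fderiv _)).deriv
  have hφcont : Continuous φ := hF.continuous.comp (by fun_prop)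
  have hφmin : IsLocalMin φ 0 :=
    IsLocalMin.comp_continuous (g := fun t : ℝ => x + t • v) (by simpa using hmin)
      (by fun_prop)
  by_contra! hneg
  -- then `0` is also a local maximum of `φ`, so `φ` is locally constant and `φ''(0) = 0`
  have hφmax : IsLocalMax φ 0 :=
    isLocalMax_of_deriv_deriv_neg (hφ'' ▸ hneg) hφmin.deriv_eq_zero hφcont.continuousAt
  have hconst : φ =ᶠ[𝓝 0] fun _ => φ 0 := by
    filter_upwards [hφmin, hφmax] with t h₁ h₂ using le_antisymm h₂ h₁
  have hzero : deriv (deriv φ) 0 = 0 := by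
    simp [hconst.deriv.deriv_eq]
  linarith

theorem IsLocalMin.fderiv_add_const_smul (hmin : IsLocalMin G x) (hG : DifferentiableAt ℝ G x)
    (hh : DifferentiableAt ℝ h x) (c : ℝ) :
    fderiv ℝ (G + c • h) x = c • fderiv ℝ h x := by
  rw [fderiv_add hG (hh.const_smul c), fderiv_const_smul hh, hmin.fderiv_eq_zero, zero_add]

theorem IsLocalMin.mul_iteratedFDeriv_two_le_add_const_smul (hmin : IsLocalMin G x)
    (hG : ContDiff ℝ 2 G) (hh : ContDiffAt ℝ 2 h x) (c : ℝ) (v : E) :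
    c * iteratedFDeriv ℝ 2 h x ![v, v] ≤ iteratedFDeriv ℝ 2 (G + c • h) x ![v, v] := by
  rw [iteratedFDeriv_add_apply (g := c • h) hG.contDiffAt (hh.const_smul c),
    iteratedFDeriv_const_smul_apply hh]
  simpa using hmin.iteratedFDeriv_two_nonneg_s4 hG v

theorem Convex.mul_sq_norm_sub_le_fderiv_sub_apply {s : Set E} {α : ℝ} (hs : Convex ℝ s)
    (hF : ContDiff ℝ 2 F)
    (hconv : ∀ u ∈ s, ∀ v, α * ‖v‖ ^ 2 ≤ iteratedFDeriv ℝ 2 F u ![v, v])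
    (hx : x ∈ s) (hy : y ∈ s) :
    α * ‖y - x‖ ^ 2 ≤ (fderiv ℝ F y - fderiv ℝ F x) (y - x) := by
  set u := y - x
  have hφ : ∀ t : ℝ, HasDerivAt (fun s : ℝ => fderiv ℝ F (x + s • u) u)
      (iteratedFDeriv ℝ 2 F (x + t • u) ![u, u]) t :=
    fun t => hasDerivAt_fderiv_apply_comp_add_smul (hF.differentiable_fderiv _)
  obtain ⟨c, hc, hslope⟩ := exists_hasDerivAt_eq_slope _ _ one_pos
    (fun t _ => (hφ t).continuousAt.continuousWithinAt) (fun t _ => hφ t)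
  have hseg : x + c • u ∈ s := hs.add_smul_sub_mem hx hy ⟨hc.1.le, hc.2.le⟩
  simpa [hslope, u] using hconv _ hseg u

theorem mul_norm_sub_le_norm_fderiv {x₀ : E} {r α : ℝ} (hF : ContDiff ℝ 2 F)
    (hx₀ : fderiv ℝ F x₀ = 0)
    (hconv : ∀ u ∈ closedBall x₀ r, ∀ v, α * ‖v‖ ^ 2 ≤ iteratedFDeriv ℝ 2 F u ![v, v])
    (hx : ‖x - x₀‖ ≤ r) :
    α * ‖x - x₀‖ ≤ ‖fderiv ℝ F x‖ := by
  have hx₀r : x₀ ∈ closedBall x₀ r := mem_closedBall_self ((norm_nonneg _).trans hx)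
  have hxr : x ∈ closedBall x₀ r := by rwa [mem_closedBall, dist_eq_norm]
  have hmono := (convex_closedBall x₀ r).mul_sq_norm_sub_le_fderiv_sub_apply hF hconv hx₀r hxr
  rw [hx₀, sub_zero] at hmono
  rcases (norm_nonneg (x - x₀)).eq_or_lt with hzero | hpos
  · simp [← hzero]
  refine le_of_mul_le_mul_right ?_ hpos
  calc α * ‖x - x₀‖ * ‖x - x₀‖ = α * ‖x - x₀‖ ^ 2 := by ring
    _ ≤ fderiv ℝ F x (x - x₀) := hmono
    _ ≤ ‖fderiv ℝ F x‖ * ‖x - x₀‖ := (le_abs_self _).trans ((fderiv ℝ F x).le_opNorm _)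

end Calculus

theorem norm_gradient_eq_norm_fderiv {E : Type*} [NormedAddCommGroup E] [InnerProductSpace ℝ E]
    [CompleteSpace E] (F : E → ℝ) (x : E) : ‖gradient F x‖ = ‖fderiv ℝ F x‖ :=
  (InnerProductSpace.toDual ℝ E).symm.norm_map (fderiv ℝ F x)

theorem IsStrictSaddle.exists_forall_le_and_mul_norm_sub_le {d : ℕ}
    {F : EuclideanSpace ℝ (Fin d) → ℝ} {α γ τ : ℝ} {w : EuclideanSpace ℝ (Fin d)}
    (hF : IsStrictSaddle F α γ τ) (hgrad : ‖gradient F w‖ < τ)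
    (hcurv : ∀ v, ‖v‖ = 1 → -γ < iteratedFDeriv ℝ 2 F w ![v, v]) :
    ∃ w₀, (∀ u, F w₀ ≤ F u) ∧ α * ‖w - w₀‖ ≤ ‖fderiv ℝ F w‖ := by
  obtain ⟨hF2, hglob, hcases⟩ := hF
  rcases hcases w with hlarge | ⟨v, hv, hneg⟩ | ⟨ν, -, w₀, hw₀, hdist, hconv⟩
  · exact absurd hlarge hgrad.not_ge
  · exact absurd hneg (hcurv v hv).not_ge
  · exact ⟨w₀, hglob w₀ hw₀, mul_norm_sub_le_norm_fderiv hF2 hw₀.fderiv_eq_zero hconv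
      (by linarith [norm_nonneg (w - w₀)])⟩

theorem IsStrictSaddle.exists_forall_le_of_isLocalMin_of_eq_add_smul {d : ℕ}
    {F G h : EuclideanSpace ℝ (Fin d) → ℝ} {α γ τ c : ℝ} {w : EuclideanSpace ℝ (Fin d)}
    (hF : IsStrictSaddle F α γ τ) (hsplit : F = G + c • h) (hc : 0 ≤ c)
    (hG : ContDiff ℝ 2 G) (hh : ContDiff ℝ 2 h) (hmin : IsLocalMin G w)
    (hgrad : c * ‖gradient h w‖ < τ)
    (hcurv : ∀ v, ‖v‖ = 1 → -γ < c * iteratedFDeriv ℝ 2 h w ![v, v]) :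
    ∃ w₀, (∀ u, F w₀ ≤ F u) ∧ α * ‖w - w₀‖ ≤ c * ‖gradient h w‖ := by
  have hnorm : ‖fderiv ℝ F w‖ = c * ‖gradient h w‖ := by
    rw [hsplit, hmin.fderiv_add_const_smul (hG.differentiable two_ne_zero _)
      (hh.differentiable two_ne_zero _), norm_smul, Real.norm_of_nonneg hc,
      norm_gradient_eq_norm_fderiv]
  rw [← hnorm]
  refine hF.exists_forall_le_and_mul_norm_sub_le (by rwa [norm_gradient_eq_norm_fderiv, hnorm])
    fun v hv => (hcurv v hv).trans_le ?_
  rw [hsplit]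
  exact hmin.mul_iteratedFDeriv_two_le_add_const_smul hG hh.contDiffAt c v

/-- If each `f j` is `C²`, `ρ`-Lipschitz, with Hessian quadratic form
bounded by `β₁‖v‖²`, the empirical risk `F̂ = (1/n)∑ f j` is `(α, γ, τ)`-strict saddle,
`n > max(ρ/τ, β₁/γ)`, and `ŵᵢ` is a global minimizer of the leave-one-out average,
then there is a global minimizer `w̄` of `F̂` with `fᵢ(ŵᵢ) − fᵢ(w̄) ≤ 2ρ²/(αn)`. -/
theorem stmt_4 {d n : ℕ} (f : Fin n → EuclideanSpace ℝ (Fin d) → ℝ)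
    (ρ β₁ α γ τ : ℝ) (hα : 0 < α) (hγ : 0 < γ) (hτ : 0 < τ)
    (hsmooth : ∀ j, ContDiff ℝ 2 (f j))
    (hlip : ∀ j (u v : EuclideanSpace ℝ (Fin d)), |f j u - f j v| ≤ ρ * ‖u - v‖)
    (hgrad : ∀ j w, ‖gradient (f j) w‖ ≤ ρ)
    (hhess : ∀ j (w v : EuclideanSpace ℝ (Fin d)),
      |iteratedFDeriv ℝ 2 (f j) w ![v, v]| ≤ β₁ * ‖v‖ ^ 2)
    (hsaddle : IsStrictSaddle (fun w => (1 / n : ℝ) * ∑ j, f j w) α γ τ)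
    (hn : (n : ℝ) > max (ρ / τ) (β₁ / γ))
    (i : Fin n) (wi : EuclideanSpace ℝ (Fin d))
    (hmin : ∀ w, (1 / n : ℝ) * ∑ j ∈ Finset.univ.erase i, f j wi ≤
      (1 / n : ℝ) * ∑ j ∈ Finset.univ.erase i, f j w) :
    ∃ wbar : EuclideanSpace ℝ (Fin d),
      (∀ w, (1 / n : ℝ) * ∑ j, f j wbar ≤ (1 / n : ℝ) * ∑ j, f j w) ∧
      f i wi - f i wbar ≤ 2 * ρ ^ 2 / (α * n) := by
  set F : EuclideanSpace ℝ (Fin d) → ℝ := fun w => (1 / n : ℝ) * ∑ j, f j w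
  set G : EuclideanSpace ℝ (Fin d) → ℝ :=
    fun w => (1 / n : ℝ) * ∑ j ∈ Finset.univ.erase i, f j w
  have hsplit : F = G + (1 / n : ℝ) • f i := by
    funext w
    simp only [F, G, Pi.add_apply, Pi.smul_apply, smul_eq_mul,
      ← Finset.add_sum_erase _ _ (Finset.mem_univ i)]
    ring
  have hn₀ : (0 : ℝ) < n := by exact_mod_cast i.pos
  have hc : (0 : ℝ) ≤ 1 / n := by positivity
  have hρτ : 1 / n * ρ < τ := by
    rw [one_div_mul_eq_div, div_lt_comm₀ hn₀ hτ]; exact (le_max_left _ _).trans_lt hn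
  have hβγ : 1 / n * β₁ < γ := by
    rw [one_div_mul_eq_div, div_lt_comm₀ hn₀ hγ]; exact (le_max_right _ _).trans_lt hn
  obtain ⟨w₀, hw₀min, hclose⟩ := hsaddle.exists_forall_le_of_isLocalMin_of_eq_add_smul hsplit hc
    (contDiff_const.mul (ContDiff.sum fun j _ => hsmooth j)) (hsmooth i)
    (Eventually.of_forall hmin) ((mul_le_mul_of_nonneg_left (hgrad i wi) hc).trans_lt hρτ)
    fun v hv => by
      have hfi := mul_le_mul_of_nonneg_left (abs_le.mp (hhess i wi v)).1 hc
      rw [hv, one_pow, mul_one, mul_neg] at hfi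
      linarith
  refine ⟨w₀, hw₀min, ?_⟩
  have hρ : 0 ≤ ρ := (norm_nonneg _).trans (hgrad i wi)
  have hclose' : α * ‖wi - w₀‖ * n ≤ ρ := by
    rw [← le_div_iff₀ hn₀, ← one_div_mul_eq_div]
    exact hclose.trans (mul_le_mul_of_nonneg_left (hgrad i wi) hc)
  calc f i wi - f i w₀ ≤ ρ * ‖wi - w₀‖ := (le_abs_self _).trans (hlip i wi w₀)
    _ ≤ 2 * ρ ^ 2 / (α * n) := by
      rw [le_div_iff₀ (by positivity)]
      nlinarith [sq_nonneg ρ, mul_le_mul_of_nonneg_left hclose' hρ]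
end

section
/- Let 𝒟 be a probability distribution on a measurable space 𝒵, let f : ℝ^d × 𝒵 → ℝ be measurable with F(w) = E_{z∼𝒟}[f(w,z)], and let w* be a global minimizer of F. Let A : 𝒵^{n−1} → ℝ^d be a measurable learning rule, and let Â : 𝒵^n → ℝ^d be a measurable empirical risk minimizer, i.e., for 𝒟^n-almost every S = (z_1,...,z_n), (1/n)∑_{i=1}^n f(Â(S), z_i) ≤ (1/n)∑_{i=1}^n f(w, z_i) for all w ∈ ℝ^d. Assume all the relevant integrals are finite. Then E_{S'∼𝒟^{n−1}}[F(A(S'))] − F(w*) ≤ E_{S∼𝒟^n}[(1/n)∑_{i=1}^n (f(A(S_{−i}), z_i) − f(Â(S), z_i))], where S_{−i} denotes the sample S with its i-th coordinate removed. -/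
open MeasureTheory

/-- Let `F(w) = E_{z∼μ}[f(w,z)]` and let `w*` be a global minimizer
of `F`. Let `A` be a learning rule on samples of size `n` and `Â` an (a.e.) empirical
risk minimizer on samples of size `n+1`. Assuming the relevant integrability,
`E_{S'∼μ^n}[F(A(S'))] − F(w*)` is bounded by the average leave-one-out stability
`E_{S∼μ^{n+1}}[(1/(n+1)) ∑ᵢ (f(A(S₋ᵢ), zᵢ) − f(Â(S), zᵢ))]`. -/
theorem stmt_5 {d n : ℕ} {Z : Type*} [MeasurableSpace Z] (μ : Measure Z)
    [IsProbabilityMeasure μ]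
    (f : EuclideanSpace ℝ (Fin d) → Z → ℝ)
    (hf : Measurable (Function.uncurry f))
    (wstar : EuclideanSpace ℝ (Fin d))
    (hws : ∀ w, ∫ z, f wstar z ∂μ ≤ ∫ z, f w z ∂μ)
    (A : (Fin n → Z) → EuclideanSpace ℝ (Fin d)) (hA : Measurable A)
    (Ahat : (Fin (n + 1) → Z) → EuclideanSpace ℝ (Fin d)) (hAhat : Measurable Ahat)
    (hERM : ∀ᵐ S ∂(Measure.pi fun _ : Fin (n + 1) => μ),
      ∀ w, (1 / (n + 1) : ℝ) * ∑ i, f (Ahat S) (S i) ≤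
        (1 / (n + 1) : ℝ) * ∑ i, f w (S i))
    (hInt1 : Integrable (fun S' => ∫ z, f (A S') z ∂μ) (Measure.pi fun _ : Fin n => μ))
    (hInt2 : ∀ i : Fin (n + 1),
      Integrable (fun S : Fin (n + 1) → Z => f (A (S ∘ i.succAbove)) (S i))
        (Measure.pi fun _ : Fin (n + 1) => μ))
    (hInt3 : ∀ i : Fin (n + 1),
      Integrable (fun S : Fin (n + 1) → Z => f (Ahat S) (S i))
        (Measure.pi fun _ : Fin (n + 1) => μ))
    (hInt4 : Integrable (f wstar) μ) :
    (∫ S', (∫ z, f (A S') z ∂μ) ∂(Measure.pi fun _ : Fin n => μ)) - ∫ z, f wstar z ∂μ ≤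
      ∫ S, (1 / (n + 1) : ℝ) * ∑ i, (f (A (S ∘ i.succAbove)) (S i) - f (Ahat S) (S i))
        ∂(Measure.pi fun _ : Fin (n + 1) => μ) := by
  set π : Measure (Fin (n + 1) → Z) := Measure.pi fun _ => μ with hπ
  set πn : Measure (Fin n → Z) := Measure.pi fun _ => μ with hπn
  have hprobn : IsProbabilityMeasure πn := by rw [hπn]; infer_instance
  have hprob : IsProbabilityMeasure π := by rw [hπ]; infer_instance
  set e : ∀ i : Fin (n + 1), (Fin (n + 1) → Z) ≃ᵐ Z × (Fin n → Z) :=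
    fun i => MeasurableEquiv.piFinSuccAbove (fun _ => Z) i with he
  have hmp : ∀ i : Fin (n + 1), MeasurePreserving (e i) π (μ.prod πn) := fun i =>
    measurePreserving_piFinSuccAbove (fun _ => μ) i
  -- key step 1 : leave-one-out term
  have key1 : ∀ i : Fin (n + 1),
      ∫ S, f (A (S ∘ i.succAbove)) (S i) ∂π = ∫ S', ∫ z, f (A S') z ∂μ ∂πn := by
    intro i
    have h1 : (fun S : Fin (n + 1) → Z => f (A (S ∘ i.succAbove)) (S i)) =
        (fun p : Z × (Fin n → Z) => f (A p.2) p.1) ∘ (e i) := rfl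
    have hint : Integrable (fun p : Z × (Fin n → Z) => f (A p.2) p.1) (μ.prod πn) := by
      rw [← (hmp i).integrable_comp_emb (e i).measurableEmbedding]
      exact hInt2 i
    calc ∫ S, f (A (S ∘ i.succAbove)) (S i) ∂π
        = ∫ p, f (A p.2) p.1 ∂(μ.prod πn) := by
          rw [← (hmp i).integral_comp (e i).measurableEmbedding
            (fun p : Z × (Fin n → Z) => f (A p.2) p.1)]
          rfl
      _ = ∫ z, ∫ S', f (A S') z ∂πn ∂μ := MeasureTheory.integral_prod _ hint
      _ = ∫ S', ∫ z, f (A S') z ∂μ ∂πn := integral_integral_swap hint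
  -- integrability and integral of `f wstar (S i)`
  have hintw : Integrable (fun p : Z × (Fin n → Z) => f wstar p.1) (μ.prod πn) := by
    have h : Integrable (f wstar) (Measure.map Prod.fst (μ.prod πn)) := by
      rw [Measure.map_fst_prod]; simpa using hInt4
    exact h.comp_measurable measurable_fst
  have intw : ∀ i : Fin (n + 1), Integrable (fun S : Fin (n + 1) → Z => f wstar (S i)) π := by
    intro i
    have h1 : (fun S : Fin (n + 1) → Z => f wstar (S i)) =
        (fun p : Z × (Fin n → Z) => f wstar p.1) ∘ (e i) := rfl
    rw [h1, (hmp i).integrable_comp_emb (e i).measurableEmbedding]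
    exact hintw
  have key2 : ∀ i : Fin (n + 1), ∫ S, f wstar (S i) ∂π = ∫ z, f wstar z ∂μ := by
    intro i
    have h1 : (fun S : Fin (n + 1) → Z => f wstar (S i)) =
        (fun p : Z × (Fin n → Z) => f wstar p.1) ∘ (e i) := rfl
    calc ∫ S, f wstar (S i) ∂π = ∫ p, f wstar p.1 ∂(μ.prod πn) := by
          rw [← (hmp i).integral_comp (e i).measurableEmbedding
            (fun p : Z × (Fin n → Z) => f wstar p.1)]
          rfl
      _ = ∫ z, ∫ _ , f wstar z ∂πn ∂μ := MeasureTheory.integral_prod _ hintw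
      _ = ∫ z, f wstar z ∂μ := by simp
  -- ERM step
  have hsum3 : Integrable (fun S : Fin (n + 1) → Z => ∑ i, f (Ahat S) (S i)) π :=
    integrable_finset_sum _ fun i _ => hInt3 i
  have hsumw : Integrable (fun S : Fin (n + 1) → Z => ∑ i : Fin (n + 1), f wstar (S i)) π :=
    integrable_finset_sum _ fun i _ => intw i
  have erm : ∫ S, ∑ i, f (Ahat S) (S i) ∂π ≤ ((n : ℝ) + 1) * ∫ z, f wstar z ∂μ := by
    have hle : ∀ᵐ S ∂π, ∑ i, f (Ahat S) (S i) ≤ ∑ i : Fin (n + 1), f wstar (S i) := by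
      filter_upwards [hERM] with S hS
      have := hS wstar
      have hpos : (0 : ℝ) < 1 / (n + 1) := by positivity
      exact le_of_mul_le_mul_left (by linarith [this]) hpos
    calc ∫ S, ∑ i, f (Ahat S) (S i) ∂π
        ≤ ∫ S, ∑ i : Fin (n + 1), f wstar (S i) ∂π := integral_mono_ae hsum3 hsumw hle
      _ = ∑ i : Fin (n + 1), ∫ S, f wstar (S i) ∂π := integral_finset_sum _ fun i _ => intw i
      _ = ((n : ℝ) + 1) * ∫ z, f wstar z ∂μ := by
          simp [key2, Finset.sum_const, mul_comm]
  -- compute the RHS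
  have hsum2 : Integrable (fun S : Fin (n + 1) → Z =>
      ∑ i, f (A (S ∘ i.succAbove)) (S i)) π :=
    integrable_finset_sum _ fun i _ => hInt2 i
  have rhs_eq : ∫ S, (1 / (n + 1) : ℝ) * ∑ i, (f (A (S ∘ i.succAbove)) (S i) - f (Ahat S) (S i)) ∂π
      = (1 / (n + 1) : ℝ) * ((∑ i : Fin (n + 1), ∫ S, f (A (S ∘ i.succAbove)) (S i) ∂π)
          - ∫ S, ∑ i, f (Ahat S) (S i) ∂π) := by
    rw [integral_const_mul]
    congr 1
    simp_rw [Finset.sum_sub_distrib]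
    rw [integral_sub hsum2 hsum3, integral_finset_sum _ fun i _ => hInt2 i]
  rw [rhs_eq]
  have hn1 : (0:ℝ) < (n : ℝ) + 1 := by positivity
  have hsumA : (∑ i : Fin (n + 1), ∫ S, f (A (S ∘ i.succAbove)) (S i) ∂π)
      = ((n : ℝ) + 1) * ∫ S', ∫ z, f (A S') z ∂μ ∂πn := by
    simp [key1, Finset.sum_const, mul_comm]
  rw [hsumA]
  rw [div_mul_eq_mul_div, one_mul, le_div_iff₀ hn1]
  push_cast
  ring_nf
  nlinarith [erm]
end

section
/- Let A be a real symmetric d×d matrix with orthonormal eigenvectors u_1, ..., u_d and eigenvalues λ_1 ≥ λ_2 ≥ ... ≥ λ_d, and suppose λ_1 − λ_2 ≥ G for some G > 0. Let c ∈ (0, 1/32), let w be a unit vector with ⟨w, u_1⟩ ≥ 0, set λ = wᵀAw, and suppose λ_1 − λ ≤ 16cG. Then (1/2)λ_1 − (1/2) wᵀ A w ≥ (G/4) ‖w − u_1‖². -/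
open scoped RealInnerProductSpace

/-!
Expand `w` in the orthonormal eigenbasis with coefficients `aᵢ = ⟪uᵢ, w⟫`. Then
`λ₁ - ⟪w, T w⟫ = ∑_{i ≠ 1} (λ₁ - λᵢ) aᵢ² ≥ G (1 - a₁²)`, while `‖w - u₁‖² = 2 (1 - a₁)`.
Since `0 ≤ a₁ ≤ 1`, we have `1 - a₁² ≥ 1 - a₁`, which is the claim.
-/

namespace LinearMap.IsSymmetric

variable {ι E : Type*} [Fintype ι] [NormedAddCommGroup E] [InnerProductSpace ℝ E]
  {T : E →ₗ[ℝ] E} (b : OrthonormalBasis ι ℝ E) {lam : ι → ℝ}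

theorem inner_map_self_eq_sum_mul_sq (hT : T.IsSymmetric)
    (heig : ∀ i, T (b i) = lam i • b i) (w : E) :
    ⟪w, T w⟫ = ∑ i, lam i * ⟪b i, w⟫ ^ 2 := by
  rw [← b.sum_inner_mul_inner w (T w)]
  refine Finset.sum_congr rfl fun i _ => ?_
  rw [← hT, heig, real_inner_smul_left, real_inner_comm w]
  ring

theorem mul_sub_inner_sq_le_of_gap (hT : T.IsSymmetric) (heig : ∀ i, T (b i) = lam i • b i)
    {i₀ : ι} {G : ℝ} (hgap : ∀ i ≠ i₀, lam i ≤ lam i₀ - G) (w : E) :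
    G * (‖w‖ ^ 2 - ⟪b i₀, w⟫ ^ 2) ≤ lam i₀ * ‖w‖ ^ 2 - ⟪w, T w⟫ := by
  classical
  have hi₀ := Finset.mem_univ i₀
  rw [hT.inner_map_self_eq_sum_mul_sq b heig, ← b.sum_sq_inner_right,
    ← Finset.add_sum_erase _ _ hi₀, ← Finset.add_sum_erase _ _ hi₀, add_sub_cancel_left,
    Finset.mul_sum, mul_add, Finset.mul_sum, add_sub_add_left_eq_sub, ← Finset.sum_sub_distrib]
  refine Finset.sum_le_sum fun i hi => ?_
  rw [← sub_mul]
  exact mul_le_mul_of_nonneg_right (by linarith [hgap i (Finset.ne_of_mem_erase hi)]) (sq_nonneg _)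

end LinearMap.IsSymmetric

theorem stmt_12 {d : ℕ} (hd : 2 ≤ d)
    (T : EuclideanSpace ℝ (Fin d) →ₗ[ℝ] EuclideanSpace ℝ (Fin d))
    (hT : T.IsSymmetric)
    (u : Fin d → EuclideanSpace ℝ (Fin d)) (hu : Orthonormal ℝ u)
    (lam : Fin d → ℝ) (heig : ∀ i, T (u i) = lam i • u i) (hmono : Antitone lam)
    (G : ℝ) (hG : 0 < G)
    (hgap : lam ⟨0, by omega⟩ - lam ⟨1, by omega⟩ ≥ G)
    (w : EuclideanSpace ℝ (Fin d)) (hw : ‖w‖ = 1)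
    (hpos : ⟪w, u ⟨0, by omega⟩⟫ ≥ 0) :
    (1 / 2) * lam ⟨0, by omega⟩ - (1 / 2) * ⟪w, T w⟫ ≥
      (G / 4) * ‖w - u ⟨0, by omega⟩‖ ^ 2 := by
  obtain ⟨b, rfl⟩ : ∃ b : OrthonormalBasis (Fin d) ℝ (EuclideanSpace ℝ (Fin d)), ⇑b = u :=
    ⟨.mk hu (hu.linearIndependent.span_eq_top_of_card_eq_finrank' (by simp)).ge,
      OrthonormalBasis.coe_mk _ _⟩
  set u₀ := b ⟨0, by omega⟩
  have hgap' : ∀ i ≠ ⟨0, by omega⟩, lam i ≤ lam ⟨0, by omega⟩ - G := fun i hi =>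
    (hmono (show ⟨1, by omega⟩ ≤ i from Nat.one_le_iff_ne_zero.mpr fun h => hi (Fin.ext h))).trans
      (by linarith)
  have hquad := hT.mul_sub_inner_sq_le_of_gap b heig hgap' w
  rw [hw, one_pow, mul_one, real_inner_comm] at hquad
  have hdist : ‖w - u₀‖ ^ 2 = 2 - 2 * ⟪w, u₀⟫ := by
    rw [norm_sub_sq_real, hw, b.norm_eq_one]
    ring
  have hle : ⟪w, u₀⟫ ≤ 1 := by simpa [hw, u₀] using real_inner_le_norm w u₀
  rw [hdist]
  nlinarith [mul_nonneg hG.le (mul_nonneg hpos (sub_nonneg.mpr hle))]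
end

section
/- Let A be a real symmetric d×d matrix with largest eigenvalue λ_1 and corresponding unit eigenvector u_1. Let w be a unit vector, set λ = wᵀAw, and let τ > 0 satisfy ‖(λ I − A) w‖ ≤ τ and λ_1 − λ > 16τ. Then the vector v = u_1 − ⟨u_1, w⟩ w is nonzero, satisfies ⟨v, w⟩ = 0 (so v lies in the tangent space of the unit sphere at w), and ⟨v, (λ I − A) v⟩ ≤ −13 τ ‖v‖². -/
open scoped RealInnerProductSpace

set_option maxHeartbeats 2000000 in
/-- **strict-saddle / negative curvature case.** Let `T` be a symmetric
operator on `ℝ^d` with largest eigenvalue `lam1` and corresponding unit eigenvector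
`u1` (so `⟨v, T v⟩ ≤ lam1‖v‖²` for all `v`). Let `w` be a unit vector, `λ = ⟨w, T w⟩`,
and `τ > 0` with `‖(λI − T)w‖ ≤ τ` and `lam1 − λ > 16τ`. Then `v = u1 − ⟨u1, w⟩w`
is nonzero, tangent at `w` (`⟨v, w⟩ = 0`), and `⟨v, (λI − T)v⟩ ≤ −13τ‖v‖²`. -/
theorem stmt_14 {d : ℕ}
    (T : EuclideanSpace ℝ (Fin d) →ₗ[ℝ] EuclideanSpace ℝ (Fin d))
    (hT : T.IsSymmetric)
    (lam1 : ℝ) (u1 : EuclideanSpace ℝ (Fin d)) (hu1 : ‖u1‖ = 1)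
    (heig : T u1 = lam1 • u1)
    (hmax : ∀ v : EuclideanSpace ℝ (Fin d), ⟪v, T v⟫ ≤ lam1 * ‖v‖ ^ 2)
    (w : EuclideanSpace ℝ (Fin d)) (hw : ‖w‖ = 1)
    (τ : ℝ) (hτ : 0 < τ)
    (hgrad : ‖⟪w, T w⟫ • w - T w‖ ≤ τ)
    (hfar : lam1 - ⟪w, T w⟫ > 16 * τ) :
    u1 - ⟪u1, w⟫ • w ≠ 0 ∧
    ⟪u1 - ⟪u1, w⟫ • w, w⟫ = 0 ∧
    ⟪u1 - ⟪u1, w⟫ • w,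
        ⟪w, T w⟫ • (u1 - ⟪u1, w⟫ • w) - T (u1 - ⟪u1, w⟫ • w)⟫ ≤
      -13 * τ * ‖u1 - ⟪u1, w⟫ • w‖ ^ 2 := by
  set lam : ℝ := ⟪w, T w⟫ with hlam
  set c : ℝ := ⟪u1, w⟫ with hc
  set v : EuclideanSpace ℝ (Fin d) := u1 - c • w with hv
  set g : EuclideanSpace ℝ (Fin d) := lam • w - T w with hg
  clear_value lam c v g
  have hw2 : ⟪w, w⟫ = (1 : ℝ) := by
    rw [real_inner_self_eq_norm_sq, hw]; norm_num
  have hu2 : ⟪u1, u1⟫ = (1 : ℝ) := by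
    rw [real_inner_self_eq_norm_sq, hu1]; norm_num
  have hwu : ⟪w, u1⟫ = c := by rw [hc, real_inner_comm]
  have hvw : ⟪v, w⟫ = 0 := by
    rw [hv, inner_sub_left, real_inner_smul_left, hw2, ← hc]; ring
  have hvu : ⟪v, u1⟫ = 1 - c ^ 2 := by
    rw [hv, inner_sub_left, real_inner_smul_left, hu2, hwu]; ring
  have hnv : ‖v‖ ^ 2 = 1 - c ^ 2 := by
    rw [← real_inner_self_eq_norm_sq]
    nth_rewrite 2 [hv]
    rw [inner_sub_right, real_inner_smul_right, hvu, hvw]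
    ring
  have hng : ‖g‖ ≤ τ := hgrad
  have hug : ⟪u1, g⟫ = (lam - lam1) * c := by
    have hTw : ⟪u1, T w⟫ = lam1 * c := by
      rw [← hT u1 w, heig, real_inner_smul_left, ← hc]
    rw [hg, inner_sub_right, real_inner_smul_right, hTw, ← hc]
    ring
  have habs_ug : |⟪u1, g⟫| ≤ τ := by
    calc |⟪u1, g⟫| ≤ ‖u1‖ * ‖g‖ := abs_real_inner_le_norm u1 g
      _ ≤ τ := by rw [hu1, one_mul]; exact hng
  have hcabs : |c| ≤ 1 / 16 := by
    rw [hug, abs_mul, abs_of_nonpos (by linarith : lam - lam1 ≤ 0)] at habs_ug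
    nlinarith [abs_nonneg c, hτ.le]
  have hc2 : c ^ 2 ≤ 1 / 256 := by nlinarith [sq_abs c, abs_nonneg c, hcabs]
  have hvpos : (0 : ℝ) < ‖v‖ ^ 2 := by rw [hnv]; nlinarith
  have hvne : v ≠ 0 := by
    intro h
    rw [h, norm_zero] at hvpos
    norm_num at hvpos
  have hvle : ‖v‖ ≤ 1 := by
    have h1 : ‖v‖ ^ 2 ≤ 1 := by rw [hnv]; nlinarith [sq_nonneg c]
    exact (pow_le_one_iff_of_nonneg (norm_nonneg v) two_ne_zero).mp h1
  have hvg : |⟪v, g⟫| ≤ τ := by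
    calc |⟪v, g⟫| ≤ ‖v‖ * ‖g‖ := abs_real_inner_le_norm v g
      _ ≤ 1 * τ := by
          exact mul_le_mul hvle hng (norm_nonneg g) one_pos.le
      _ = τ := one_mul τ
  have hcvg : |c * ⟪v, g⟫| ≤ τ / 16 := by
    rw [abs_mul]
    calc |c| * |⟪v, g⟫| ≤ (1 / 16) * τ :=
      mul_le_mul hcabs hvg (abs_nonneg _) (by norm_num)
      _ = τ / 16 := by ring
  have hvTw : ⟪v, T w⟫ = -⟪v, g⟫ := by
    have : ⟪v, g⟫ = lam * ⟪v, w⟫ - ⟪v, T w⟫ := by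
      rw [hg, inner_sub_right, real_inner_smul_right]
    rw [this, hvw]; ring
  have hvTv : ⟪v, T v⟫ = lam1 * (1 - c ^ 2) + c * ⟪v, g⟫ := by
    have : T v = lam1 • u1 - c • T w := by
      rw [hv, map_sub, map_smul, heig]
    rw [this, inner_sub_right, real_inner_smul_right, real_inner_smul_right, hvu, hvTw]
    ring
  refine ⟨hvne, hvw, ?_⟩
  have hgoal : ⟪v, lam • v - T v⟫ = (lam - lam1) * (1 - c ^ 2) - c * ⟪v, g⟫ := by
    rw [inner_sub_right, real_inner_smul_right, real_inner_self_eq_norm_sq, hnv, hvTv]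
    ring
  rw [hgoal, hnv]
  have h1 : -(τ / 16) ≤ c * ⟪v, g⟫ := neg_le_of_abs_le hcvg
  nlinarith [hfar, hτ, hc2, sq_nonneg c]
end

section
/- Let d ≥ 1, set τ₀ = (10d)^{−4}, and let w ∈ ℝ^d be a unit vector with w_1 ≥ 0 and |w_i| ≤ τ₀ for all i ≥ 2. Then 1 − ∑_{i=1}^d w_i⁴ ≥ (1/4) ‖w − e_1‖², where e_1 is the first standard basis vector. -/
/-- **ICA local strong convexity.** Let `d ≥ 1`, `τ₀ = (10d)⁻⁴`, and
let `w ∈ ℝ^d` be a unit vector with `w 0 ≥ 0` and `|w i| ≤ τ₀` for all `i ≠ 0`.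
Then `1 − ∑ᵢ wᵢ⁴ ≥ (1/4)‖w − e₁‖²`, where `e₁` is the first standard basis
vector. -/
theorem stmt_16 {d : ℕ} (hd : 1 ≤ d)
    (w : EuclideanSpace ℝ (Fin d)) (hw : ‖w‖ = 1)
    (hpos : w ⟨0, by omega⟩ ≥ 0)
    (hsmall : ∀ i : Fin d, i ≠ ⟨0, by omega⟩ → |w i| ≤ (1 / (10 * d) ^ 4 : ℝ)) :
    1 - ∑ i, (w i) ^ 4 ≥
      (1 / 4) * ‖w - EuclideanSpace.single (⟨0, by omega⟩ : Fin d) (1 : ℝ)‖ ^ 2 := by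
  set i0 : Fin d := ⟨0, by omega⟩ with hi0
  have hd' : (1 : ℝ) ≤ (d : ℝ) := by exact_mod_cast hd
  have hτ : (1 / (10 * d) ^ 4 : ℝ) ≤ 1 / 2 := by
    have h10 : (10 : ℝ) ^ 4 ≤ (10 * (d : ℝ)) ^ 4 :=
      pow_le_pow_left₀ (by norm_num) (by nlinarith) 4
    rw [div_le_div_iff₀ (by nlinarith) (by norm_num)]
    nlinarith
  -- sum of squares equals 1
  have hsum2 : ∑ i, (w i) ^ 2 = 1 := by
    have h := hw
    rw [EuclideanSpace.norm_eq] at h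
    have h2 : ∑ i, ‖w i‖ ^ 2 = 1 := by
      have hnn : (0 : ℝ) ≤ ∑ i, ‖w i‖ ^ 2 := by positivity
      nlinarith [Real.sq_sqrt hnn, h]
    simpa [Real.norm_eq_abs, sq_abs] using h2
  -- norm of w - e1 squared
  have hnorm : ‖w - EuclideanSpace.single i0 (1 : ℝ)‖ ^ 2
      = ∑ i, (w i - if i = i0 then (1 : ℝ) else 0) ^ 2 := by
    rw [EuclideanSpace.norm_eq, Real.sq_sqrt (by positivity)]
    apply Finset.sum_congr rfl
    intro i _
    simp [EuclideanSpace.single_apply, Real.norm_eq_abs, sq_abs]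
  set s : ℝ := ∑ i ∈ Finset.univ.erase i0, (w i) ^ 2 with hs
  have hs_nonneg : 0 ≤ s := Finset.sum_nonneg fun i _ => sq_nonneg _
  have hsplit2 : (w i0) ^ 2 + s = 1 := by
    have h := hsum2
    rw [← Finset.add_sum_erase _ (fun i => (w i) ^ 2) (Finset.mem_univ i0)] at h
    exact h
  have hnorm2 : ‖w - EuclideanSpace.single i0 (1 : ℝ)‖ ^ 2 = (w i0 - 1) ^ 2 + s := by
    rw [hnorm, ← Finset.add_sum_erase _ (fun i => (w i - if i = i0 then (1:ℝ) else 0) ^ 2) (Finset.mem_univ i0)]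
    simp only [if_pos rfl]
    congr 1
    apply Finset.sum_congr rfl
    intro i hi
    rw [if_neg (Finset.mem_erase.mp hi).1]
    ring
  -- bound fourth powers
  have h4 : ∑ i, (w i) ^ 4 ≤ (w i0) ^ 4 + (1 / 4) * s := by
    rw [← Finset.add_sum_erase _ (fun i => (w i) ^ 4) (Finset.mem_univ i0)]
    have : ∑ i ∈ Finset.univ.erase i0, (w i) ^ 4
        ≤ ∑ i ∈ Finset.univ.erase i0, (1 / 4) * (w i) ^ 2 := by
      apply Finset.sum_le_sum
      intro i hi
      have hne := (Finset.mem_erase.mp hi).1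
      have h1 := hsmall i hne
      have h2 : |w i| ≤ 1 / 2 := h1.trans hτ
      have h3 : (w i) ^ 2 ≤ (1 / 2) ^ 2 := by
        rw [← sq_abs]
        exact pow_le_pow_left₀ (abs_nonneg _) h2 2
      nlinarith [sq_nonneg (w i)]
    rw [← Finset.mul_sum] at this
    linarith
  have ha : 0 ≤ w i0 := hpos
  have ha1 : w i0 ≤ 1 := by nlinarith [sq_nonneg (w i0)]
  rw [hnorm2]
  nlinarith [sq_nonneg (w i0), sq_nonneg (1 - w i0), sq_nonneg (w i0 + 1),
    mul_nonneg (mul_nonneg ha ha) ha, sq_nonneg ((w i0)^2 - 1)]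
end

section
/- Let d ≥ 1, let x be uniformly distributed on {−1, 1}^d, and let A be a d×d real orthogonal matrix with columns a_1, ..., a_d. Then for every u ∈ ℝ^d, E[⟨u, Ax⟩⁴] = 3‖u‖⁴ − 2∑_{i=1}^d ⟨a_i, u⟩⁴. Equivalently, (1/2)(3‖u‖⁴ − E[⟨u, Ax⟩⁴]) = ∑_{i=1}^d ⟨a_i, u⟩⁴ = T(u,u,u,u), where T = ∑_{i=1}^d a_i^{⊗4}. -/
/-!
Writing `u ⬝ᵥ A x = c ⬝ᵥ x` with `c = Aᵀ u`, the fourth moment of the Rademacher combination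
`c ⬝ᵥ x` is `3 ‖c‖⁴ − 2 ∑ᵢ cᵢ⁴`: averaging over the first sign kills the odd powers of `c₀`,
which gives a recursion in the dimension for the second and fourth moments together.
Orthogonality of `A` turns `‖c‖` into `‖u‖`.
-/

open Matrix

def boolSign (b : Bool) : ℝ := if b then 1 else -1

@[simp] lemma boolSign_true : boolSign true = 1 := rfl

@[simp] lemma boolSign_false : boolSign false = -1 := rfl

lemma sum_boolSign_dotProduct_fin_succ {n : ℕ} (c : Fin (n + 1) → ℝ) (g : ℝ → ℝ) :
    ∑ s : Fin (n + 1) → Bool, g (c ⬝ᵥ boolSign ∘ s) =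
      ∑ t : Fin n → Bool,
        (g (c 0 + Fin.tail c ⬝ᵥ boolSign ∘ t) + g (-c 0 + Fin.tail c ⬝ᵥ boolSign ∘ t)) := by
  rw [← (Fin.consEquiv fun _ => Bool).sum_comp, Fintype.sum_prod_type, Fintype.sum_bool,
    ← Finset.sum_add_distrib]
  simp [dotProduct, Fin.sum_univ_succ, Fin.tail]

lemma sum_boolSign_dotProduct_sq (n : ℕ) (c : Fin n → ℝ) :
    ∑ s : Fin n → Bool, (c ⬝ᵥ boolSign ∘ s) ^ 2 = 2 ^ n * (c ⬝ᵥ c) := by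
  induction n with
  | zero => simp
  | succ n ih =>
    calc ∑ s : Fin (n + 1) → Bool, (c ⬝ᵥ boolSign ∘ s) ^ 2
        = ∑ t : Fin n → Bool, (2 * c 0 ^ 2 + 2 * (Fin.tail c ⬝ᵥ boolSign ∘ t) ^ 2) := by
          rw [sum_boolSign_dotProduct_fin_succ c (· ^ 2)]
          exact Finset.sum_congr rfl fun t _ => by ring
      _ = 2 ^ (n + 1) * (c ⬝ᵥ c) := by
          rw [Finset.sum_add_distrib, Finset.sum_const, ← Finset.mul_sum, ih, dotProduct,
            dotProduct, Fin.sum_univ_succ]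
          simp only [Finset.card_univ, Fintype.card_fun, Fintype.card_bool, Fintype.card_fin,
            nsmul_eq_mul, Nat.cast_pow, Nat.cast_ofNat, Fin.tail]
          ring

lemma sum_boolSign_dotProduct_pow_four (n : ℕ) (c : Fin n → ℝ) :
    ∑ s : Fin n → Bool, (c ⬝ᵥ boolSign ∘ s) ^ 4 =
      2 ^ n * (3 * (c ⬝ᵥ c) ^ 2 - 2 * ∑ i, c i ^ 4) := by
  induction n with
  | zero => simp
  | succ n ih =>
    calc ∑ s : Fin (n + 1) → Bool, (c ⬝ᵥ boolSign ∘ s) ^ 4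
        = ∑ t : Fin n → Bool, (2 * c 0 ^ 4 + 12 * c 0 ^ 2 * (Fin.tail c ⬝ᵥ boolSign ∘ t) ^ 2
            + 2 * (Fin.tail c ⬝ᵥ boolSign ∘ t) ^ 4) := by
          rw [sum_boolSign_dotProduct_fin_succ c (· ^ 4)]
          exact Finset.sum_congr rfl fun t _ => by ring
      _ = 2 ^ (n + 1) * (3 * (c ⬝ᵥ c) ^ 2 - 2 * ∑ i, c i ^ 4) := by
          rw [Finset.sum_add_distrib, Finset.sum_add_distrib, Finset.sum_const, ← Finset.mul_sum,
            ← Finset.mul_sum, ih, sum_boolSign_dotProduct_sq, dotProduct,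
            dotProduct, Fin.sum_univ_succ, Fin.sum_univ_succ]
          simp only [Finset.card_univ, Fintype.card_fun, Fintype.card_bool, Fintype.card_fin,
            nsmul_eq_mul, Nat.cast_pow, Nat.cast_ofNat, Fin.tail]
          ring

lemma Matrix.vecMul_dotProduct_vecMul_self {m n R : Type*} [Fintype m] [Fintype n]
    [DecidableEq m] [CommRing R] {A : Matrix m n R} (hA : A * Aᵀ = 1) (u : m → R) :
    u ᵥ* A ⬝ᵥ u ᵥ* A = u ⬝ᵥ u := by
  rw [← dotProduct_mulVec, ← vecMul_transpose, vecMul_vecMul, hA, vecMul_one]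

/-- **ICA fourth-moment identity.** Let `x` be uniform on `{−1,1}^d`
(encoded as the uniform average over `s : Fin d → Bool`) and let `A` be a `d×d`
orthogonal matrix with columns `aᵢ = A·,ᵢ`. Then for every `u`,
`E[⟨u, Ax⟩⁴] = 3‖u‖⁴ − 2∑ᵢ⟨aᵢ, u⟩⁴`; equivalently
`(1/2)(3‖u‖⁴ − E[⟨u, Ax⟩⁴]) = ∑ᵢ⟨aᵢ, u⟩⁴ = T(u,u,u,u)` for `T = ∑ᵢ aᵢ^{⊗4}`. -/
theorem stmt_17 {d : ℕ} (A : Matrix (Fin d) (Fin d) ℝ) (hA : Aᵀ * A = 1)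
    (u : Fin d → ℝ) :
    (1 / 2 ^ d : ℝ) * ∑ s : Fin d → Bool,
        (u ⬝ᵥ A.mulVec (fun i => if s i then (1 : ℝ) else -1)) ^ 4 =
      3 * (u ⬝ᵥ u) ^ 2 - 2 * ∑ i, ((fun j => A j i) ⬝ᵥ u) ^ 4 ∧
    (1 / 2 : ℝ) * (3 * (u ⬝ᵥ u) ^ 2 -
        (1 / 2 ^ d : ℝ) * ∑ s : Fin d → Bool,
          (u ⬝ᵥ A.mulVec (fun i => if s i then (1 : ℝ) else -1)) ^ 4) =
      ∑ i, ((fun j => A j i) ⬝ᵥ u) ^ 4 := by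
  have hcol : ∀ i, (fun j => A j i) ⬝ᵥ u = (u ᵥ* A) i := fun i => dotProduct_comm _ _
  have hmoment : ∑ s : Fin d → Bool, (u ⬝ᵥ A *ᵥ (fun i => if s i then (1 : ℝ) else -1)) ^ 4 =
      2 ^ d * (3 * (u ⬝ᵥ u) ^ 2 - 2 * ∑ i, (u ᵥ* A) i ^ 4) := by
    simp only [dotProduct_mulVec]
    rw [← vecMul_dotProduct_vecMul_self (mul_eq_one_comm.mp hA) u]
    exact sum_boolSign_dotProduct_pow_four d (u ᵥ* A)
  simp only [hmoment, hcol]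
  constructor
  · field_simp
  · field_simp
    ring
end
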